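/- arXiv:2208.14715 — 16 statements merged into one kernel-verified Lean document; each statement's English description precedes it below -/
import Mathlib

section
/- Every connexive Heyting algebra satisfies the identities C6: x ∧ (y → z) = x ∧ ((x ∧ y) → (x ∧ z)) and C7: x → x = 1; hence every connexive Heyting algebra is a semi-Heyting algebra. -/
theorem stmt4 {A : Type*} [DistribLattice A] [BoundedOrder A] (imp : A → A → A)
    (C1 : ∀ x y z : A, imp (imp x y) (imp (imp y z) (imp x z)) = ⊤)
    (C2 : ∀ x y : A, imp (imp x y) (imp (imp x (imp y ⊥)) ⊥) = ⊤)
    (C3 : ∀ x y : A, x ⊓ imp x y = x ⊓ y)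
    (C4 : ∀ x y z : A, imp x y ≤ imp (z ⊓ x) (z ⊓ y))
    (C5 : ∀ x y z : A, imp x y ≤ imp (z ⊔ x) (z ⊔ y)) :
    (∀ x y z : A, x ⊓ imp y z = x ⊓ imp (x ⊓ y) (x ⊓ z)) ∧ (∀ x : A, imp x x = ⊤) := by
  -- imp ⊤ a = a
  have htop : ∀ a : A, imp ⊤ a = a := by
    intro a
    have h := C3 ⊤ a
    simpa using h
  -- C7 : imp x x = ⊤
  have C7 : ∀ x : A, imp x x = ⊤ := by
    intro x
    have h := C4 ⊤ ⊤ x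
    rw [htop ⊤] at h
    simp only [inf_top_eq] at h
    exact top_le_iff.mp h
  -- x ≤ imp x ⊤
  have le_imp_top : ∀ x : A, x ≤ imp x ⊤ := by
    intro x
    have h := C3 x ⊤
    simp only [inf_top_eq] at h
    exact inf_eq_left.mp h
  -- a ≤ imp b (b ⊓ a)
  have L5 : ∀ a b : A, a ≤ imp b (b ⊓ a) := by
    intro a b
    have h := C4 ⊤ a b
    rw [htop a] at h
    simpa using h
  -- crux : x ≤ imp (x ⊓ z) z
  have crux : ∀ x z : A, x ≤ imp (x ⊓ z) z := by
    intro x z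
    have h := C4 x ⊤ z
    simp only [inf_top_eq] at h
    calc x ≤ imp x ⊤ := le_imp_top x
      _ ≤ imp (z ⊓ x) z := h
      _ = imp (x ⊓ z) z := by rw [inf_comm]
  -- transitivity : imp a b ⊓ imp b c ≤ imp a c
  have T : ∀ a b c : A, imp a b ⊓ imp b c ≤ imp a c := by
    intro a b c
    have h1 : imp a b ≤ imp (imp b c) (imp a c) := by
      have h := C3 (imp a b) (imp (imp b c) (imp a c))
      rw [C1 a b c] at h
      simp only [inf_top_eq] at h
      exact inf_eq_left.mp h.symm
    have h2 : imp a b ⊓ imp b c ≤ imp b c ⊓ imp (imp b c) (imp a c) :=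
      inf_le_inf h1 le_rfl |>.trans (le_of_eq (inf_comm _ _))
    calc imp a b ⊓ imp b c ≤ imp b c ⊓ imp (imp b c) (imp a c) := h2
      _ = imp b c ⊓ imp a c := C3 _ _
      _ ≤ imp a c := inf_le_right
  constructor
  · intro x y z
    apply le_antisymm
    · exact inf_le_inf_left x (C4 y z x)
    · apply le_inf inf_le_left
      -- x ⊓ imp (x⊓y) (x⊓z) ≤ imp y z
      have hA : x ⊓ imp (x ⊓ y) (x ⊓ z) ≤ imp y (x ⊓ z) := by
        have h1 : x ≤ imp y (x ⊓ y) := by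
          have := L5 x y
          rwa [inf_comm y x] at this
        calc x ⊓ imp (x ⊓ y) (x ⊓ z) ≤ imp y (x ⊓ y) ⊓ imp (x ⊓ y) (x ⊓ z) :=
              inf_le_inf h1 le_rfl
          _ ≤ imp y (x ⊓ z) := T _ _ _
      have hB : x ⊓ imp (x ⊓ y) (x ⊓ z) ≤ imp (x ⊓ z) z :=
        inf_le_left.trans (crux x z)
      calc x ⊓ imp (x ⊓ y) (x ⊓ z) ≤ imp y (x ⊓ z) ⊓ imp (x ⊓ z) z := le_inf hA hB
        _ ≤ imp y z := T _ _ _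
  · exact C7
end

section
/- The three-element chain 0 < a < 1 with implication given by 1→1=1, 1→a=a, 1→0=0, a→1=1, a→a=1, a→0=0, 0→1=0, 0→a=0, 0→0=1 is a connexive Heyting algebra in which (a → 1) → (1 → a) ≠ 1; so implication in connexive Heyting algebras is not symmetric in general. -/
def imp3 : Fin 3 → Fin 3 → Fin 3 := fun x y =>
  if x = 0 then (if y = 0 then 2 else 0)
  else if y = 0 then 0
  else if x ≤ y then 2 else y

theorem stmt5 :
    (∀ x y z : Fin 3, imp3 (imp3 x y) (imp3 (imp3 y z) (imp3 x z)) = ⊤) ∧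
    (∀ x y : Fin 3, imp3 (imp3 x y) (imp3 (imp3 x (imp3 y ⊥)) ⊥) = ⊤) ∧
    (∀ x y : Fin 3, x ⊓ imp3 x y = x ⊓ y) ∧
    (∀ x y z : Fin 3, imp3 x y ≤ imp3 (z ⊓ x) (z ⊓ y)) ∧
    (∀ x y z : Fin 3, imp3 x y ≤ imp3 (z ⊔ x) (z ⊔ y)) ∧
    imp3 (imp3 1 ⊤) (imp3 ⊤ 1) ≠ ⊤ := by decide
end

section
/- In every connexive Heyting algebra, (a → b) ∧ (b → c) ≤ a → c for all a, b, c. -/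
theorem stmt6 {A : Type*} [DistribLattice A] [BoundedOrder A] (imp : A → A → A)
    (C1 : ∀ x y z : A, imp (imp x y) (imp (imp y z) (imp x z)) = ⊤)
    (C2 : ∀ x y : A, imp (imp x y) (imp (imp x (imp y ⊥)) ⊥) = ⊤)
    (C3 : ∀ x y : A, x ⊓ imp x y = x ⊓ y)
    (C4 : ∀ x y z : A, imp x y ≤ imp (z ⊓ x) (z ⊓ y))
    (C5 : ∀ x y z : A, imp x y ≤ imp (z ⊔ x) (z ⊔ y)) :
    ∀ a b c : A, imp a b ⊓ imp b c ≤ imp a c := by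
  intro a b c
  have h1 : imp a b ≤ imp (imp b c) (imp a c) := by
    have := C3 (imp a b) (imp (imp b c) (imp a c))
    rw [C1, inf_top_eq] at this
    exact le_of_inf_eq this.symm
  calc imp a b ⊓ imp b c ≤ imp b c ⊓ imp (imp b c) (imp a c) := by
        rw [inf_comm]; exact inf_le_inf_left _ h1
    _ = imp b c ⊓ imp a c := C3 _ _
    _ ≤ imp a c := inf_le_right
end

section
/- In every connexive Heyting algebra, a → ¬a = 0 and ¬a → a = 0 for all a, where ¬x := x → 0. -/
theorem stmt7 {A : Type*} [DistribLattice A] [BoundedOrder A] (imp : A → A → A)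
    (C1 : ∀ x y z : A, imp (imp x y) (imp (imp y z) (imp x z)) = ⊤)
    (C2 : ∀ x y : A, imp (imp x y) (imp (imp x (imp y ⊥)) ⊥) = ⊤)
    (C3 : ∀ x y : A, x ⊓ imp x y = x ⊓ y)
    (C4 : ∀ x y z : A, imp x y ≤ imp (z ⊓ x) (z ⊓ y))
    (C5 : ∀ x y z : A, imp x y ≤ imp (z ⊔ x) (z ⊔ y)) :
    ∀ a : A, imp a (imp a ⊥) = ⊥ ∧ imp (imp a ⊥) a = ⊥ := by
  -- u → v = ⊤ implies u ≤ v
  have hle : ∀ u v : A, imp u v = ⊤ → u ≤ v := by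
    intro u v h
    have := C3 u v
    rw [h, inf_top_eq] at this
    exact this.le.trans inf_le_right
  -- ⊤ → ⊤ = ⊤
  have htt : imp ⊤ (⊤ : A) = ⊤ := by
    have := C3 (⊤ : A) ⊤
    simpa using this
  -- x → x = ⊤
  have hself : ∀ x : A, imp x x = ⊤ := by
    intro x
    have := C4 (⊤ : A) ⊤ x
    rw [htt, inf_top_eq] at this
    exact top_le_iff.mp this
  -- ⊤ → ⊥ = ⊥
  have htb : imp ⊤ (⊥ : A) = ⊥ := by
    have := C3 (⊤ : A) ⊥
    simpa using this
  intro a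
  constructor
  · have h2 := C2 a a
    rw [hself a] at h2
    have h3 : imp (imp a (imp a ⊥)) ⊥ = ⊤ := top_le_iff.mp (hle _ _ h2)
    exact le_bot_iff.mp (hle _ _ h3)
  · have h2 := C2 (imp a ⊥) a
    rw [hself (imp a ⊥)] at h2
    have h3 := hle _ _ h2
    rw [htb] at h3
    exact le_bot_iff.mp h3
end

section
/- In every connexive Heyting algebra, (a → b) ∧ (a → ¬b) = 0 for all a, b (connexive contraries are never jointly satisfied), where ¬x := x → 0. -/
theorem stmt8 {A : Type*} [DistribLattice A] [BoundedOrder A] (imp : A → A → A)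
    (C1 : ∀ x y z : A, imp (imp x y) (imp (imp y z) (imp x z)) = ⊤)
    (C2 : ∀ x y : A, imp (imp x y) (imp (imp x (imp y ⊥)) ⊥) = ⊤)
    (C3 : ∀ x y : A, x ⊓ imp x y = x ⊓ y)
    (C4 : ∀ x y z : A, imp x y ≤ imp (z ⊓ x) (z ⊓ y))
    (C5 : ∀ x y z : A, imp x y ≤ imp (z ⊔ x) (z ⊔ y)) :
    ∀ a b : A, imp a b ⊓ imp a (imp b ⊥) = ⊥ := by
  intro a b
  have h1 : imp a b ≤ imp (imp a (imp b ⊥)) ⊥ := by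
    have h := C3 (imp a b) (imp (imp a (imp b ⊥)) ⊥)
    rw [C2, inf_top_eq] at h
    rw [h]
    exact inf_le_right
  have h2 := C3 (imp a (imp b ⊥)) ⊥
  rw [inf_bot_eq] at h2
  apply le_antisymm _ bot_le
  calc imp a b ⊓ imp a (imp b ⊥)
      ≤ imp (imp a (imp b ⊥)) ⊥ ⊓ imp a (imp b ⊥) := inf_le_inf_right _ h1
    _ = ⊥ := by rw [inf_comm, h2]
end

section
/- In every connexive Heyting algebra, 0 → a = a → 0 for all a. -/
theorem stmt9 {A : Type*} [DistribLattice A] [BoundedOrder A] (imp : A → A → A)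
    (C1 : ∀ x y z : A, imp (imp x y) (imp (imp y z) (imp x z)) = ⊤)
    (C2 : ∀ x y : A, imp (imp x y) (imp (imp x (imp y ⊥)) ⊥) = ⊤)
    (C3 : ∀ x y : A, x ⊓ imp x y = x ⊓ y)
    (C4 : ∀ x y z : A, imp x y ≤ imp (z ⊓ x) (z ⊓ y))
    (C5 : ∀ x y z : A, imp x y ≤ imp (z ⊔ x) (z ⊔ y)) :
    ∀ a : A, imp ⊥ a = imp a ⊥ := by
  have le_of_imp : ∀ x y : A, imp x y = ⊤ → x ≤ y := by
    intro x y h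
    have h3 := C3 x y
    rw [h, inf_top_eq] at h3
    exact h3.le.trans inf_le_right
  have itop : ∀ y : A, imp ⊤ y = y := by
    intro y
    have h3 := C3 ⊤ y
    simpa using h3
  have meet_neg : ∀ x : A, x ⊓ imp x ⊥ = ⊥ := by
    intro x
    have h3 := C3 x ⊥
    simpa using h3
  have self_le : ∀ b : A, b ≤ imp b ⊤ := by
    intro b
    have h3 := C3 b ⊤
    rw [inf_top_eq] at h3
    exact inf_eq_left.mp h3
  have dir2 : ∀ a : A, imp a ⊥ ≤ imp ⊥ a := by
    intro a
    have h1 : imp a ⊥ ≤ imp (imp a ⊥) ⊤ := self_le _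
    have h2 := C4 (imp a ⊥) ⊤ a
    rw [meet_neg a, inf_top_eq] at h2
    exact h1.trans h2
  have dneg : ∀ a : A, a ≤ imp (imp a ⊥) ⊥ := by
    intro a
    have h := C4 ⊤ a (imp a ⊥)
    rw [itop a, inf_top_eq, inf_comm (imp a ⊥) a, meet_neg a] at h
    exact h
  have anti : ∀ u v : A, u ≤ v → imp v ⊥ ≤ imp u ⊥ := by
    intro u v huv
    have h := C4 v ⊥ u
    rw [inf_bot_eq, inf_eq_left.mpr huv] at h
    exact h
  have dir1 : ∀ a : A, imp ⊥ a ≤ imp a ⊥ := by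
    intro a
    have h0 : imp ⊥ a ≤ imp (imp ⊥ (imp a ⊥)) ⊥ := le_of_imp _ _ (C2 ⊥ a)
    have h1 : imp (imp ⊥ (imp a ⊥)) ⊥ ≤ imp (imp (imp a ⊥) ⊥) ⊥ :=
      anti _ _ (dir2 (imp a ⊥))
    have h2 : imp (imp (imp a ⊥) ⊥) ⊥ ≤ imp a ⊥ := anti _ _ (dneg a)
    exact h0.trans (h1.trans h2)
  intro a
  exact le_antisymm (dir1 a) (dir2 a)
end

section
/- In every connexive Heyting algebra, ¬¬a = a → 1 for all a, where ¬x := x → 0. -/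
theorem stmt10 {A : Type*} [DistribLattice A] [BoundedOrder A] (imp : A → A → A)
    (C1 : ∀ x y z : A, imp (imp x y) (imp (imp y z) (imp x z)) = ⊤)
    (C2 : ∀ x y : A, imp (imp x y) (imp (imp x (imp y ⊥)) ⊥) = ⊤)
    (C3 : ∀ x y : A, x ⊓ imp x y = x ⊓ y)
    (C4 : ∀ x y z : A, imp x y ≤ imp (z ⊓ x) (z ⊓ y))
    (C5 : ∀ x y z : A, imp x y ≤ imp (z ⊔ x) (z ⊔ y)) :
    ∀ a : A, imp (imp a ⊥) ⊥ = imp a ⊤ := by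
  -- `imp ⊤ y = y`
  have L0 : ∀ y : A, imp ⊤ y = y := by
    intro y
    have h := C3 ⊤ y
    simpa using h
  -- modus ponens as order
  have MPle : ∀ x y : A, imp x y = ⊤ → x ≤ y := by
    intro x y h
    have h3 := C3 x y
    rw [h, inf_top_eq] at h3
    exact inf_eq_left.mp h3.symm
  -- meet-transitivity
  have mtrans : ∀ x y z : A, imp x y ⊓ imp y z ≤ imp x z := by
    intro x y z
    have h1 : imp x y ≤ imp (imp y z) (imp x z) := MPle _ _ (C1 x y z)
    calc imp x y ⊓ imp y z ≤ imp (imp y z) (imp x z) ⊓ imp y z :=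
          inf_le_inf_right _ h1
      _ = imp y z ⊓ imp (imp y z) (imp x z) := inf_comm _ _
      _ = imp y z ⊓ imp x z := C3 _ _
      _ ≤ imp x z := inf_le_right
  intro a
  apply le_antisymm
  · -- ¬¬a ≤ a → ⊤
    have h5 : imp a (imp (imp a ⊥) ⊥) = ⊤ := by
      have h := C2 ⊤ a
      simp only [L0] at h
      exact h
    have h7 : imp (imp a ⊥) ⊥ ≤ imp (imp (imp a ⊥) ⊥) ⊤ := by
      have h3 := C3 (imp (imp a ⊥) ⊥) ⊤
      rw [inf_top_eq] at h3
      exact inf_eq_left.mp h3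
    calc imp (imp a ⊥) ⊥
        ≤ imp a (imp (imp a ⊥) ⊥) ⊓ imp (imp (imp a ⊥) ⊥) ⊤ :=
          le_inf (by rw [h5]; exact le_top) h7
      _ ≤ imp a ⊤ := mtrans _ _ _
  · -- a → ⊤ ≤ ¬¬a
    have h := C2 a ⊤
    rw [L0] at h
    exact MPle _ _ h
end

section
/- In every connexive Heyting algebra, ¬(a → b) = ¬(b → a) for all a, b, where ¬x := x → 0. -/
theorem stmt11 {A : Type*} [DistribLattice A] [BoundedOrder A] (imp : A → A → A)
    (C1 : ∀ x y z : A, imp (imp x y) (imp (imp y z) (imp x z)) = ⊤)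
    (C2 : ∀ x y : A, imp (imp x y) (imp (imp x (imp y ⊥)) ⊥) = ⊤)
    (C3 : ∀ x y : A, x ⊓ imp x y = x ⊓ y)
    (C4 : ∀ x y z : A, imp x y ≤ imp (z ⊓ x) (z ⊓ y))
    (C5 : ∀ x y z : A, imp x y ≤ imp (z ⊔ x) (z ⊔ y)) :
    ∀ a b : A, imp (imp a b) ⊥ = imp (imp b a) ⊥ := by
  -- Modus ponens: if imp t s = ⊤ then t ≤ s
  have mp : ∀ t s : A, imp t s = ⊤ → t ≤ s := by
    intro t s h
    have h3 := C3 t s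
    rw [h, inf_top_eq] at h3
    exact h3.le.trans inf_le_right
  -- imp ⊤ y = y
  have ltop : ∀ y : A, imp ⊤ y = y := by
    intro y
    have h3 := C3 ⊤ y
    rwa [top_inf_eq, top_inf_eq] at h3
  -- reflexivity: imp x x = ⊤
  have refl : ∀ x : A, imp x x = ⊤ := by
    intro x
    have h := C4 ⊤ ⊤ x
    rw [ltop ⊤, inf_top_eq] at h
    exact le_antisymm le_top h
  -- pseudocomplement direction: w ⊓ u = ⊥ → w ≤ imp u ⊥
  have P2 : ∀ w u : A, w ⊓ u = ⊥ → w ≤ imp u ⊥ := by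
    intro w u h
    have h1 : imp ⊤ w ≤ imp (u ⊓ ⊤) (u ⊓ w) := C4 ⊤ w u
    rw [ltop, inf_top_eq, inf_comm, h] at h1
    exact h1
  -- key inequality
  have key : ∀ a b : A, imp (imp a b) ⊥ ≤ imp (imp b a) ⊥ := by
    intro a b
    -- imp b a ≤ imp (imp a b) ⊤
    have h1 : imp b a ≤ imp (imp a b) (imp b b) := mp _ _ (C1 b a b)
    rw [refl b] at h1
    -- imp (imp a b) ⊤ ≤ imp (imp (imp a b) ⊥) ⊥
    have h2 : imp (imp a b) ⊤ ≤ imp (imp (imp a b) (imp ⊤ ⊥)) ⊥ :=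
      mp _ _ (C2 (imp a b) ⊤)
    rw [ltop ⊥] at h2
    have h3 : imp b a ≤ imp (imp (imp a b) ⊥) ⊥ := h1.trans h2
    -- so imp (imp a b) ⊥ ⊓ imp b a = ⊥
    have h4 : imp (imp a b) ⊥ ⊓ imp b a = ⊥ := by
      have := inf_le_inf_left (imp (imp a b) ⊥) h3
      rw [C3, inf_bot_eq] at this
      exact le_antisymm this bot_le
    exact P2 _ _ h4
  intro a b
  exact le_antisymm (key a b) (key b a)
end

section
/- In every connexive Heyting algebra, ¬(a → b) = a → ¬b for all a, b, where ¬x := x → 0. -/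
theorem stmt12 {A : Type*} [DistribLattice A] [BoundedOrder A] (imp : A → A → A)
    (C1 : ∀ x y z : A, imp (imp x y) (imp (imp y z) (imp x z)) = ⊤)
    (C2 : ∀ x y : A, imp (imp x y) (imp (imp x (imp y ⊥)) ⊥) = ⊤)
    (C3 : ∀ x y : A, x ⊓ imp x y = x ⊓ y)
    (C4 : ∀ x y z : A, imp x y ≤ imp (z ⊓ x) (z ⊓ y))
    (C5 : ∀ x y z : A, imp x y ≤ imp (z ⊔ x) (z ⊔ y)) :
    ∀ a b : A, imp (imp a b) ⊥ = imp a (imp b ⊥) := by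
  -- modus ponens (order form)
  have mp : ∀ u v : A, imp u v = ⊤ → u ≤ v := by
    intro u v h
    have h3 := C3 u v
    rw [h, inf_top_eq] at h3
    exact h3.le.trans inf_le_right
  have topimp : ∀ t : A, imp ⊤ t = t := by
    intro t
    have h3 := C3 ⊤ t
    rwa [top_inf_eq, top_inf_eq] at h3
  have irefl : ∀ x : A, imp x x = ⊤ := by
    intro x
    have h := C4 ⊤ ⊤ x
    rw [topimp, inf_top_eq] at h
    exact top_le_iff.mp h
  have lb : ∀ x y : A, x ⊓ y ≤ imp x y := by
    intro x y
    rw [← C3]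
    exact inf_le_right
  have D4 : ∀ x y z : A, imp x y ≤ imp (imp y z) (imp x z) := fun x y z => mp _ _ (C1 x y z)
  have suf : ∀ u v w : A, imp u v = ⊤ → imp v w ≤ imp u w := by
    intro u v w h
    apply mp
    apply top_le_iff.mp
    calc ⊤ = imp u v := h.symm
      _ ≤ imp (imp v w) (imp u w) := D4 u v w
  have inf_compl : ∀ x : A, x ⊓ imp x ⊥ = ⊥ := by
    intro x
    have h3 := C3 x ⊥
    rwa [inf_bot_eq] at h3
  -- double negation introduction
  have dni : ∀ x : A, imp x (imp (imp x ⊥) ⊥) = ⊤ := by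
    intro x
    have h := C2 ⊤ x
    rwa [topimp, topimp] at h
  -- base lower bound
  have base : ∀ t x y : A, t ≤ imp (t ⊔ x) (t ⊔ y) := by
    intro t x y
    have h1 : t ≤ (t ⊔ x) ⊓ imp (t ⊔ x) (t ⊔ y) := by
      rw [C3]
      exact le_inf le_sup_left le_sup_left
    exact h1.trans inf_le_right
  -- pseudocomplement property of negation
  have K2 : ∀ t x : A, t ⊓ x = ⊥ → t ≤ imp x ⊥ := by
    intro t x h
    have h1 : t ≤ imp (t ⊔ x) (t ⊔ ⊥) := base t x ⊥
    have h2 : imp (t ⊔ x) (t ⊔ ⊥) ≤ imp (x ⊓ (t ⊔ x)) (x ⊓ (t ⊔ ⊥)) := C4 _ _ x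
    have e1 : x ⊓ (t ⊔ x) = x := inf_eq_left.mpr le_sup_right
    have e2 : x ⊓ (t ⊔ ⊥) = ⊥ := by rw [sup_bot_eq, inf_comm, h]
    rw [e1, e2] at h2
    exact h1.trans h2
  have antitoneN : ∀ u v : A, u ≤ v → imp v ⊥ ≤ imp u ⊥ := by
    intro u v huv
    apply K2
    apply le_bot_iff.mp
    calc imp v ⊥ ⊓ u ≤ v ⊓ imp v ⊥ := le_inf (inf_le_right.trans huv) inf_le_left
      _ = ⊥ := inf_compl v
  -- lemma L: disjointness gives lower bound
  have lemL : ∀ t x y : A, t ⊓ x = ⊥ → t ⊓ y = ⊥ → t ≤ imp x y := by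
    intro t x y hx hy
    have h1 : t ≤ imp (t ⊔ x) (t ⊔ y) := base t x y
    have h2 : imp (t ⊔ x) (t ⊔ y) ≤ imp ((x ⊔ y) ⊓ (t ⊔ x)) ((x ⊔ y) ⊓ (t ⊔ y)) := C4 _ _ _
    have key : ∀ u v : A, t ⊓ u = ⊥ → t ⊓ v = ⊥ → (u ⊔ v) ⊓ (t ⊔ u) = u := by
      intro u v hu hv
      rw [inf_sup_left, inf_comm (u ⊔ v) t, inf_sup_left, hu, hv, bot_sup_eq, bot_sup_eq]
      exact inf_eq_right.mpr le_sup_left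
    have e1 : (x ⊔ y) ⊓ (t ⊔ x) = x := key x y hx hy
    have e2 : (y ⊔ x) ⊓ (t ⊔ y) = y := key y x hy hx
    rw [sup_comm y x] at e2
    rw [e1, e2] at h2
    exact h1.trans h2
  intro a b
  set Na := imp a ⊥ with hNa
  set Nb := imp b ⊥ with hNb
  set NNa := imp Na ⊥ with hNNa
  set P := imp a b with hP
  set Q := imp a Nb with hQ
  -- direction A : Q ≤ ¬P
  have hPQ : P ⊓ Q = ⊥ := by
    have h := mp _ _ (C2 a b)
    apply le_bot_iff.mp
    calc P ⊓ Q ≤ Q ⊓ imp Q ⊥ := le_inf inf_le_right (inf_le_left.trans h)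
      _ = ⊥ := inf_compl Q
  have dirA : Q ≤ imp P ⊥ := K2 Q P (by rw [inf_comm]; exact hPQ)
  -- direction B
  have hinfNab : (Na ⊓ Nb) ⊓ a = ⊥ := by
    apply le_bot_iff.mp
    calc (Na ⊓ Nb) ⊓ a ≤ a ⊓ Na := le_inf inf_le_right (inf_le_left.trans inf_le_left)
      _ = ⊥ := inf_compl a
  have hinfNab' : (Na ⊓ Nb) ⊓ b = ⊥ := by
    apply le_bot_iff.mp
    calc (Na ⊓ Nb) ⊓ b ≤ b ⊓ Nb := le_inf inf_le_right (inf_le_left.trans inf_le_right)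
      _ = ⊥ := inf_compl b
  set m := (a ⊓ b) ⊔ (Na ⊓ Nb) with hm
  have hmP : m ≤ P := sup_le (lb a b) (lemL _ _ _ hinfNab hinfNab')
  set t := imp m ⊥ with ht
  have htm : t ⊓ m = ⊥ := by rw [inf_comm]; exact inf_compl m
  have fact1 : t ⊓ (a ⊓ b) = ⊥ := by
    apply le_bot_iff.mp
    calc t ⊓ (a ⊓ b) ≤ t ⊓ m := inf_le_inf_left t le_sup_left
      _ = ⊥ := htm
  have fact2 : t ⊓ (Na ⊓ Nb) = ⊥ := by
    apply le_bot_iff.mp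
    calc t ⊓ (Na ⊓ Nb) ≤ t ⊓ m := inf_le_inf_left t le_sup_right
      _ = ⊥ := htm
  have htb : t ⊓ b ≤ Na := by
    apply K2
    apply le_bot_iff.mp
    calc (t ⊓ b) ⊓ a ≤ t ⊓ (a ⊓ b) := by
          refine le_inf (inf_le_left.trans inf_le_left) (le_inf inf_le_right (inf_le_left.trans inf_le_right))
      _ = ⊥ := fact1
  have htNNa : t ⊓ NNa ≤ Nb := by
    apply K2
    apply le_bot_iff.mp
    calc (t ⊓ NNa) ⊓ b ≤ Na ⊓ NNa := by
          refine le_inf ?_ (inf_le_left.trans inf_le_right)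
          calc (t ⊓ NNa) ⊓ b ≤ t ⊓ b := inf_le_inf_right b inf_le_left
            _ ≤ Na := htb
      _ = ⊥ := inf_compl Na
  have htNb : t ⊓ Nb ≤ NNa := by
    apply K2
    apply le_bot_iff.mp
    calc (t ⊓ Nb) ⊓ Na ≤ t ⊓ (Na ⊓ Nb) := by
          refine le_inf (inf_le_left.trans inf_le_left) (le_inf inf_le_right (inf_le_left.trans inf_le_right))
      _ = ⊥ := fact2
  set p := NNa ⊔ Nb with hp
  have hpt1 : p ⊓ t ≤ NNa := by
    rw [inf_sup_right]
    exact sup_le inf_le_left (by rw [inf_comm]; exact htNb)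
  have hpt2 : p ⊓ t ≤ Nb := by
    rw [inf_sup_right]
    exact sup_le (by rw [inf_comm]; exact htNNa) inf_le_left
  have e1 : p ⊓ (t ⊔ NNa) = NNa := by
    rw [inf_sup_left]
    rw [inf_eq_right.mpr (le_sup_left : (NNa : A) ≤ p)]
    exact sup_eq_right.mpr hpt1
  have e2 : p ⊓ (t ⊔ Nb) = Nb := by
    rw [inf_sup_left]
    rw [inf_eq_right.mpr (le_sup_right : (Nb : A) ≤ p)]
    exact sup_eq_right.mpr hpt2
  have hstep : t ≤ imp NNa Nb := by
    have h1 : t ≤ imp (t ⊔ NNa) (t ⊔ Nb) := base t NNa Nb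
    have h2 := C4 (t ⊔ NNa) (t ⊔ Nb) p
    rw [e1, e2] at h2
    exact h1.trans h2
  have hfinal : imp NNa Nb ≤ Q := suf a NNa Nb (dni a)
  have dirB : imp P ⊥ ≤ Q := (antitoneN m P hmP).trans (hstep.trans hfinal)
  exact le_antisymm dirB dirA
end

section
/- In every connexive Heyting algebra, for all a, b: a → b = 1 if and only if a ≤ b and ¬a = ¬b (where ¬x := x → 0). -/
theorem stmt13 {A : Type*} [DistribLattice A] [BoundedOrder A] (imp : A → A → A)
    (C1 : ∀ x y z : A, imp (imp x y) (imp (imp y z) (imp x z)) = ⊤)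
    (C2 : ∀ x y : A, imp (imp x y) (imp (imp x (imp y ⊥)) ⊥) = ⊤)
    (C3 : ∀ x y : A, x ⊓ imp x y = x ⊓ y)
    (C4 : ∀ x y z : A, imp x y ≤ imp (z ⊓ x) (z ⊓ y))
    (C5 : ∀ x y z : A, imp x y ≤ imp (z ⊔ x) (z ⊔ y)) :
    ∀ a b : A, imp a b = ⊤ ↔ a ≤ b ∧ imp a ⊥ = imp b ⊥ := by
  -- ⊤ → z = z
  have topimp : ∀ z : A, imp ⊤ z = z := by
    intro z
    have h := C3 ⊤ z
    simpa using h
  -- modus ponens: u → v = ⊤ implies u ≤ v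
  have le_of : ∀ u v : A, imp u v = ⊤ → u ≤ v := by
    intro u v h
    have h3 := C3 u v
    rw [h, inf_top_eq] at h3
    exact inf_eq_left.mp h3.symm
  -- reflexivity: x → x = ⊤
  have refl : ∀ x : A, imp x x = ⊤ := by
    intro x
    have h := C4 ⊤ ⊤ x
    rw [topimp, inf_top_eq] at h
    exact top_le_iff.mp h
  -- Aristotle's thesis: x → ¬x = ⊥
  have arist : ∀ x : A, imp x (imp x ⊥) = ⊥ := by
    intro x
    have h := C2 x x
    rw [refl x, topimp] at h
    exact le_bot_iff.mp (le_of _ _ h)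
  intro a b
  constructor
  · intro h
    have hab : a ≤ b := le_of a b h
    -- ¬b ≤ ¬a from transitivity C1
    have h1 := C1 a b ⊥
    rw [h, topimp] at h1
    have hba : imp b ⊥ ≤ imp a ⊥ := le_of _ _ h1
    -- b → ¬a = ⊥
    have h2 := C1 a b (imp a ⊥)
    rw [h, topimp] at h2
    have h2' : imp b (imp a ⊥) ≤ imp a (imp a ⊥) := le_of _ _ h2
    rw [arist a] at h2'
    have h2'' : imp b (imp a ⊥) = ⊥ := le_bot_iff.mp h2'
    -- hence b ⊓ ¬a = ⊥
    have h3 := C3 b (imp a ⊥)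
    rw [h2'', inf_bot_eq] at h3
    -- pseudocomplement: ¬a ≤ ¬b
    have h4 := C4 ⊤ (imp a ⊥) b
    rw [topimp, inf_top_eq, ← h3] at h4
    exact ⟨hab, le_antisymm h4 hba⟩
  · rintro ⟨hab, hneg⟩
    -- b → ¬a = ⊥ by Aristotle
    have hba : imp b (imp a ⊥) = ⊥ := by rw [hneg]; exact arist b
    have h2 := C2 b a
    rw [hba, refl ⊥] at h2
    -- (b → a) → ⊤ = ⊤, now meet with b via C4
    have h3 := C4 (imp b a) ⊤ b
    rw [h2, C3 b a, inf_top_eq, inf_eq_right.mpr hab] at h3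
    exact top_le_iff.mp h3
end

section
/- In every connexive Heyting algebra, the strong Boethius law holds: (a → b) → ((b → c) → ¬(a → ¬c)) = 1 for all a, b, c, where ¬x := x → 0. -/
theorem stmt14 {A : Type*} [DistribLattice A] [BoundedOrder A] (imp : A → A → A)
    (C1 : ∀ x y z : A, imp (imp x y) (imp (imp y z) (imp x z)) = ⊤)
    (C2 : ∀ x y : A, imp (imp x y) (imp (imp x (imp y ⊥)) ⊥) = ⊤)
    (C3 : ∀ x y : A, x ⊓ imp x y = x ⊓ y)
    (C4 : ∀ x y z : A, imp x y ≤ imp (z ⊓ x) (z ⊓ y))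
    (C5 : ∀ x y z : A, imp x y ≤ imp (z ⊔ x) (z ⊔ y)) :
    ∀ a b c : A, imp (imp a b) (imp (imp b c) (imp (imp a (imp c ⊥)) ⊥)) = ⊤ := by
  -- imp ⊤ u = u
  have htop : ∀ u : A, imp ⊤ u = u := by
    intro u
    have h := C3 ⊤ u
    simpa using h
  -- transitivity at ⊤
  have trans : ∀ u v w : A, imp u v = ⊤ → imp v w = ⊤ → imp u w = ⊤ := by
    intro u v w huv hvw
    have h := C1 u v w
    rw [huv, htop, hvw, htop] at h
    exact h
  -- prefixing at ⊤
  have pre : ∀ q v w : A, imp v w = ⊤ → imp (imp q v) (imp q w) = ⊤ := by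
    intro q v w hvw
    have h := C1 q v w
    rw [hvw, htop] at h
    exact h
  intro a b c
  exact trans _ _ _ (C1 a b c) (pre (imp b c) _ _ (C2 a c))
end

section
/- Let A be a connexive Heyting algebra and define a ⇒ b := a → (a ∧ b). Then ⟨A, ∧, ∨, ⇒, 0, 1⟩ is a Heyting algebra; i.e., for all a, b, c: a ∧ b ≤ c if and only if a ≤ b ⇒ c. -/
theorem stmt15 {A : Type*} [DistribLattice A] [BoundedOrder A] (imp : A → A → A)
    (C1 : ∀ x y z : A, imp (imp x y) (imp (imp y z) (imp x z)) = ⊤)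
    (C2 : ∀ x y : A, imp (imp x y) (imp (imp x (imp y ⊥)) ⊥) = ⊤)
    (C3 : ∀ x y : A, x ⊓ imp x y = x ⊓ y)
    (C4 : ∀ x y z : A, imp x y ≤ imp (z ⊓ x) (z ⊓ y))
    (C5 : ∀ x y z : A, imp x y ≤ imp (z ⊔ x) (z ⊔ y)) :
    ∀ a b c : A, a ⊓ b ≤ c ↔ a ≤ imp b (b ⊓ c) := by
  have htop : ∀ y : A, imp ⊤ y = y := by
    intro y
    have := C3 ⊤ y
    simpa using this
  intro a b c
  constructor
  · intro h
    have hbc : b ⊓ (a ⊔ c) = b ⊓ c := by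
      rw [inf_sup_left]
      have h1 : b ⊓ a ≤ b ⊓ c :=
        le_inf inf_le_left (le_trans (by rw [inf_comm]) h)
      exact sup_eq_right.mpr h1
    have h4 := C4 ⊤ (a ⊔ c) b
    rw [inf_top_eq, hbc, htop] at h4
    exact le_trans le_sup_left h4
  · intro h
    have : a ⊓ b ≤ b ⊓ imp b (b ⊓ c) :=
      le_inf inf_le_right (le_trans inf_le_left h)
    rw [C3] at this
    exact le_trans this (le_trans inf_le_right inf_le_right)
end

section
/- Let H be a Heyting algebra with implication ⇒ and pseudocomplement ¬a := a ⇒ 0, and define a → b := (a ⇒ b) ∧ (¬a ⇒ ¬b). Then ⟨H, ∧, ∨, →, 0, 1⟩ is a connexive Heyting algebra, i.e., it satisfies C1–C5 (with negation x → 0, which coincides with ¬x). -/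
/-!
Double negation `a ↦ aᶜᶜ` is a Heyting homomorphism from `H` onto the Boolean algebra of regular
elements, and it sends `a → b := (a ⇨ b) ⊓ (aᶜ ⇨ bᶜ)` to the Boolean biconditional `a ⇔ b`.
An equation `u → v = ⊤` amounts to `u ≤ v` and `uᶜ ≤ vᶜ`. In (C1) and (C2), `u` and `v` have the
same image in the Boolean algebra (an identity between biconditionals), hence `uᶜ = vᶜ`. In (C2)
this also gives `u ≤ uᶜᶜ = v`, as `v` is a complement; in (C1), `u ≤ v` is transitivity of `→`
together with the Boolean fact `(a ⇔ b) ⊓ (a ⇔ c) ≤ b ⇔ c` for its negative component.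
(C3) is modus ponens, and (C4), (C5) follow from monotonicity of `⇨` under `c ⊓ ·` and `c ⊔ ·`,
using `aᶜ ⇨ bᶜ = b ⇨ aᶜᶜ` for the second component.
-/

open scoped symmDiff

section BooleanAlgebra

variable {B : Type*} [BooleanAlgebra B] (a b c : B)

theorem compl_bihimp_compl_right : (a ⇔ bᶜ)ᶜ = a ⇔ b := by
  rw [compl_bihimp, symmDiff_eq, compl_compl, bihimp_eq', inf_comm bᶜ]

theorem bihimp_inf_bihimp_le : (a ⇔ b) ⊓ (b ⇔ c) ≤ a ⇔ c := by
  rw [← compl_symmDiff, ← compl_symmDiff, ← compl_symmDiff, ← compl_sup]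
  exact compl_le_compl (symmDiff_triangle a b c)

theorem bihimp_bihimp_bihimp_cancel_right : (b ⇔ c) ⇔ (a ⇔ c) = a ⇔ b := by
  rw [bihimp_comm a c, bihimp_assoc, bihimp_bihimp_cancel_left, bihimp_comm]

end BooleanAlgebra

namespace Heyting.Regular

variable {α : Type*} [HeytingAlgebra α] (a b : α)

theorem toRegular_inf : toRegular (a ⊓ b) = toRegular a ⊓ toRegular b :=
  coe_injective (compl_compl_inf_distrib a b)

theorem toRegular_himp : toRegular (a ⇨ b) = toRegular a ⇨ toRegular b :=
  coe_injective (compl_compl_himp_distrib a b)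

theorem toRegular_compl : toRegular aᶜ = (toRegular a)ᶜ :=
  coe_injective (by simp only [coe_toRegular, coe_compl, compl_compl_compl])

theorem le_compl_compl_iff_toRegular_le {a b : α} : a ≤ bᶜᶜ ↔ toRegular a ≤ toRegular b :=
  (gi.gc a (toRegular b)).symm

theorem compl_eq_compl_of_toRegular_eq {a b : α} (h : toRegular a = toRegular b) : aᶜ = bᶜ := by
  simpa only [coe_toRegular, compl_compl_compl] using congrArg (fun r : Regular α => (r : α)ᶜ) h

end Heyting.Regular

open Heyting.Regular

section HeytingAlgebra

variable {α : Type*} [HeytingAlgebra α] (a b c : α)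

theorem himp_le_inf_himp_inf : a ⇨ b ≤ c ⊓ a ⇨ c ⊓ b := by
  rw [le_himp_iff]
  exact le_inf (inf_le_right.trans inf_le_left) ((inf_le_inf_left _ inf_le_right).trans himp_inf_le)

theorem himp_le_sup_himp_sup : a ⇨ b ≤ c ⊔ a ⇨ c ⊔ b := by
  rw [le_himp_iff, inf_sup_left]
  exact sup_le_sup inf_le_right himp_inf_le

theorem compl_himp_compl_le_inf : aᶜ ⇨ bᶜ ≤ (c ⊓ a)ᶜ ⇨ (c ⊓ b)ᶜ := by
  rw [himp_compl_comm aᶜ, himp_compl_comm (c ⊓ a)ᶜ, compl_compl_inf_distrib]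
  exact (himp_le_inf_himp_inf b aᶜᶜ c).trans (himp_le_himp_left (inf_le_inf_right _ le_compl_compl))

theorem compl_himp_compl_le_sup : aᶜ ⇨ bᶜ ≤ (c ⊔ a)ᶜ ⇨ (c ⊔ b)ᶜ := by
  rw [compl_sup, compl_sup]
  exact himp_le_inf_himp_inf _ _ _

def connexiveHimp : α :=
  (a ⇨ b) ⊓ (aᶜ ⇨ bᶜ)

local infixr:60 " ⇀ " => connexiveHimp

variable {a b c}

theorem connexiveHimp_eq_top_iff : a ⇀ b = ⊤ ↔ a ≤ b ∧ aᶜ ≤ bᶜ := by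
  rw [connexiveHimp, inf_eq_top_iff, himp_eq_top_iff, himp_eq_top_iff]

theorem connexiveHimp_eq_top_of_le_of_toRegular_eq (hab : a ≤ b)
    (h : toRegular a = toRegular b) : a ⇀ b = ⊤ :=
  connexiveHimp_eq_top_iff.2 ⟨hab, (compl_eq_compl_of_toRegular_eq h).le⟩

variable (a b c)

theorem connexiveHimp_bot : a ⇀ ⊥ = aᶜ := by
  rw [connexiveHimp, himp_bot, compl_bot, himp_top, inf_top_eq]

-- The lattice operations of `Regular α` agree with those of its Boolean algebra structure only up
-- to unfolding instances, so Boolean lemmas are applied to its elements by `exact`, not `rw`.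
theorem toRegular_connexiveHimp : toRegular (a ⇀ b) = toRegular a ⇔ toRegular b := by
  rw [connexiveHimp, toRegular_inf, toRegular_himp, toRegular_himp, toRegular_compl,
    toRegular_compl, compl_himp_compl]
  exact inf_comm _ _

theorem connexiveHimp_inf_connexiveHimp_le : (a ⇀ b) ⊓ (b ⇀ c) ≤ a ⇀ c :=
  le_inf ((inf_le_inf inf_le_left inf_le_left).trans (himp_triangle a b c))
    ((inf_le_inf inf_le_right inf_le_right).trans (himp_triangle aᶜ bᶜ cᶜ))

theorem connexiveHimp_inf_connexiveHimp_le_compl_compl : (a ⇀ b) ⊓ (a ⇀ c) ≤ (b ⇀ c)ᶜᶜ := by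
  rw [le_compl_compl_iff_toRegular_le, toRegular_inf, toRegular_connexiveHimp,
    toRegular_connexiveHimp, toRegular_connexiveHimp]
  have h := bihimp_inf_bihimp_le (toRegular b) (toRegular a) (toRegular c)
  rw [bihimp_comm (toRegular b)] at h
  exact h

theorem connexiveHimp_suffixing : (a ⇀ b) ⇀ ((b ⇀ c) ⇀ (a ⇀ c)) = ⊤ := by
  refine connexiveHimp_eq_top_of_le_of_toRegular_eq (le_inf ?_ ?_) ?_
  · exact le_himp_iff.2 (connexiveHimp_inf_connexiveHimp_le a b c)
  · rw [himp_compl_comm]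
    exact le_himp_iff.2 (connexiveHimp_inf_connexiveHimp_le_compl_compl a b c)
  · rw [toRegular_connexiveHimp, toRegular_connexiveHimp, toRegular_connexiveHimp,
      toRegular_connexiveHimp]
    exact (bihimp_bihimp_bihimp_cancel_right _ _ _).symm

theorem connexiveHimp_boethius : (a ⇀ b) ⇀ ((a ⇀ (b ⇀ ⊥)) ⇀ ⊥) = ⊤ := by
  rw [connexiveHimp_bot, connexiveHimp_bot]
  have h : toRegular (a ⇀ b) = toRegular (a ⇀ bᶜ)ᶜ := by
    rw [toRegular_compl, toRegular_connexiveHimp, toRegular_connexiveHimp, toRegular_compl]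
    exact (compl_bihimp_compl_right _ _).symm
  refine connexiveHimp_eq_top_of_le_of_toRegular_eq ?_ h
  calc a ⇀ b ≤ (a ⇀ b)ᶜᶜ := le_compl_compl
    _ = (a ⇀ bᶜ)ᶜᶜᶜ := congrArg Heyting.Regular.val h
    _ = (a ⇀ bᶜ)ᶜ := compl_compl_compl _

theorem inf_connexiveHimp : a ⊓ (a ⇀ b) = a ⊓ b := by
  refine le_antisymm (le_inf inf_le_left ?_) (le_inf inf_le_left (le_inf ?_ ?_))
  · exact (inf_le_inf_left _ inf_le_left).trans ((inf_himp a b).le.trans inf_le_right)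
  · exact le_himp_iff.2 (inf_le_left.trans inf_le_right)
  · exact le_himp_iff.2 ((inf_le_inf_right _ inf_le_left).trans ((inf_compl_self a).le.trans bot_le))

theorem connexiveHimp_le_inf_connexiveHimp_inf : a ⇀ b ≤ (c ⊓ a) ⇀ (c ⊓ b) :=
  inf_le_inf (himp_le_inf_himp_inf a b c) (compl_himp_compl_le_inf a b c)

theorem connexiveHimp_le_sup_connexiveHimp_sup : a ⇀ b ≤ (c ⊔ a) ⇀ (c ⊔ b) :=
  inf_le_inf (himp_le_sup_himp_sup a b c) (compl_himp_compl_le_sup a b c)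

end HeytingAlgebra

theorem stmt16 {H : Type*} [HeytingAlgebra H] :
    let arr : H → H → H := fun a b => (a ⇨ b) ⊓ (aᶜ ⇨ bᶜ)
    (∀ x : H, arr x ⊥ = xᶜ) ∧
    (∀ x y z : H, arr (arr x y) (arr (arr y z) (arr x z)) = ⊤) ∧
    (∀ x y : H, arr (arr x y) (arr (arr x (arr y ⊥)) ⊥) = ⊤) ∧
    (∀ x y : H, x ⊓ arr x y = x ⊓ y) ∧
    (∀ x y z : H, arr x y ≤ arr (z ⊓ x) (z ⊓ y)) ∧
    (∀ x y z : H, arr x y ≤ arr (z ⊔ x) (z ⊔ y)) := by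
  intro arr
  exact ⟨connexiveHimp_bot, connexiveHimp_suffixing, connexiveHimp_boethius, inf_connexiveHimp,
    connexiveHimp_le_inf_connexiveHimp_inf, connexiveHimp_le_sup_connexiveHimp_sup⟩
end

section
/- In every connexive Heyting algebra, a → b = (a → (a ∧ b)) ∧ (¬a → (¬a ∧ ¬b)) for all a, b, where ¬x := x → 0. Consequently, the maps between connexive Heyting algebras and Heyting algebras given by a ⇒ b := a → (a ∧ b) and a → b := (a ⇒ b) ∧ (¬a ⇒ ¬b) are mutually inverse. -/
theorem stmt17 {A : Type*} [DistribLattice A] [BoundedOrder A] (imp : A → A → A)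
    (C1 : ∀ x y z : A, imp (imp x y) (imp (imp y z) (imp x z)) = ⊤)
    (C2 : ∀ x y : A, imp (imp x y) (imp (imp x (imp y ⊥)) ⊥) = ⊤)
    (C3 : ∀ x y : A, x ⊓ imp x y = x ⊓ y)
    (C4 : ∀ x y z : A, imp x y ≤ imp (z ⊓ x) (z ⊓ y))
    (C5 : ∀ x y z : A, imp x y ≤ imp (z ⊔ x) (z ⊔ y))
    {H : Type*} [HeytingAlgebra H] :
    (∀ a b : A,
      imp a b = imp a (a ⊓ b) ⊓ imp (imp a ⊥) (imp a ⊥ ⊓ imp b ⊥)) ∧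
    (∀ a b : H, ((a ⇨ (a ⊓ b)) ⊓ (aᶜ ⇨ (a ⊓ b)ᶜ)) = a ⇨ b) := by
  constructor
  · -- ======================= basic derived lemmas =======================
    have hTop : ∀ y : A, imp ⊤ y = y := by
      intro y
      have h := C3 ⊤ y
      simpa using h
    have hLe : ∀ t s : A, imp t s = ⊤ → t ≤ s := by
      intro t s h
      have h3 := C3 t s
      rw [h, inf_top_eq] at h3
      exact h3.le.trans inf_le_right
    have hSuffix : ∀ x y z : A, imp x y ≤ imp (imp y z) (imp x z) :=
      fun x y z => hLe _ _ (C1 x y z)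
    have hAssert : ∀ y z : A, y ≤ imp (imp y z) z := by
      intro y z
      have h := hSuffix ⊤ y z
      rwa [hTop, hTop] at h
    have hRefl : ∀ z : A, imp z z = ⊤ := by
      intro z
      have h := hAssert ⊤ z
      rw [hTop] at h
      exact le_antisymm le_top h
    have hTrans : ∀ x y z : A, imp x y ⊓ imp y z ≤ imp x z := by
      intro x y z
      have h1 : imp y z ⊓ imp x y ≤ imp y z ⊓ imp (imp y z) (imp x z) :=
        inf_le_inf_left _ (hSuffix x y z)
      rw [C3] at h1
      exact (inf_comm (imp x y) (imp y z)).le.trans (h1.trans inf_le_right)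
    have hGalois1 : ∀ x y c : A, c ≤ imp x (x ⊓ y) → c ⊓ x ≤ y := by
      intro x y c h
      have h2 : c ⊓ x ≤ x ⊓ imp x (x ⊓ y) := by
        rw [inf_comm]
        exact inf_le_inf_left _ h
      rw [C3] at h2
      exact h2.trans (inf_le_right.trans inf_le_right)
    have hGalois2 : ∀ x y c : A, c ⊓ x ≤ y → c ≤ imp x (x ⊓ y) := by
      intro x y c h
      have h1 : c ≤ imp x (x ⊓ c) := by
        have h2 := C4 ⊤ c x
        rwa [hTop, inf_top_eq] at h2
      have h2 : imp x (x ⊓ c) ≤ imp ((x ⊓ y) ⊔ x) ((x ⊓ y) ⊔ (x ⊓ c)) :=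
        C5 x (x ⊓ c) (x ⊓ y)
      have e1 : (x ⊓ y) ⊔ x = x := sup_eq_right.mpr inf_le_left
      have e2 : (x ⊓ y) ⊔ (x ⊓ c) = x ⊓ y :=
        sup_eq_left.mpr (le_inf inf_le_left ((inf_comm x c).le.trans h))
      rw [e1, e2] at h2
      exact h1.trans h2
    -- pseudocomplement facts  (¬x := imp x ⊥)
    have hPc : ∀ x c : A, c ⊓ x ≤ ⊥ → c ≤ imp x ⊥ := by
      intro x c h
      have h1 := hGalois2 x ⊥ c h
      rwa [inf_bot_eq] at h1
    have hPcRev : ∀ x c : A, c ≤ imp x ⊥ → c ⊓ x ≤ ⊥ := by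
      intro x c h
      exact hGalois1 x ⊥ c (by rwa [inf_bot_eq])
    have hND : ∀ x : A, x ⊓ imp x ⊥ = ⊥ := by
      intro x
      have h := C3 x ⊥
      rwa [inf_bot_eq] at h
    have hNotAnti : ∀ x y : A, x ≤ y → imp y ⊥ ≤ imp x ⊥ := by
      intro x y h
      refine hPc x _ ?_
      calc imp y ⊥ ⊓ x ≤ imp y ⊥ ⊓ y := inf_le_inf_left _ h
        _ = y ⊓ imp y ⊥ := inf_comm _ _
        _ ≤ ⊥ := (hND y).le
    have hDN : ∀ x : A, x ≤ imp (imp x ⊥) ⊥ := fun x => hPc (imp x ⊥) x (hND x).le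
    have hC2' : ∀ x y : A, imp x y ⊓ imp x (imp y ⊥) ≤ ⊥ := by
      intro x y
      exact hPcRev _ _ (hLe _ _ (C2 x y))
    have hDNTop : ∀ x : A, imp x (imp (imp x ⊥) ⊥) = ⊤ := by
      intro x
      have h := C2 ⊤ x
      rwa [hTop x, hTop (imp x ⊥)] at h
    have hT : ∀ a b : A, a ≤ b → b ≤ imp (imp a ⊥) ⊥ → imp a b = ⊤ := by
      intro a b hab hb
      have h := C4 a (imp (imp a ⊥) ⊥) b
      rw [hDNTop a, inf_eq_right.mpr hab, inf_eq_left.mpr hb] at h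
      exact le_antisymm le_top h
    have hCTop : ∀ c : A, c ≤ imp c ⊤ := by
      intro c
      have h := C3 c ⊤
      rw [inf_top_eq] at h
      exact h.symm.le.trans inf_le_right
    have hBotImp : ∀ y : A, imp y ⊥ ≤ imp ⊥ y := by
      intro y
      have h := C4 (imp y ⊥) ⊤ y
      rw [hND y, inf_top_eq] at h
      exact (hCTop (imp y ⊥)).trans h
    have hL17 : ∀ x y : A, imp x ⊥ ⊓ y ≤ imp x (imp y ⊥) := by
      intro x y
      have h1 : y ≤ imp ⊥ (imp y ⊥) := (hDN y).trans (hBotImp (imp y ⊥))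
      exact (inf_le_inf_left _ h1).trans (hTrans x ⊥ (imp y ⊥))
    have hDC3 : ∀ x y : A, imp x ⊥ ⊓ imp x y ≤ imp y ⊥ := by
      intro x y
      refine hPc y _ ?_
      have h1 : (imp x ⊥ ⊓ imp x y) ⊓ y ≤ imp x y ⊓ imp x (imp y ⊥) := by
        have h2 : imp x ⊥ ⊓ y ≤ imp x (imp y ⊥) := hL17 x y
        calc (imp x ⊥ ⊓ imp x y) ⊓ y = imp x y ⊓ (imp x ⊥ ⊓ y) := by ac_rfl
          _ ≤ imp x y ⊓ imp x (imp y ⊥) := inf_le_inf_left _ h2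
      exact h1.trans (hC2' x y)
    -- ======================= the core lemma =======================
    -- if a ⊓ e = ⊥ then  ¬e → (a ⊔ e) = a
    have hCore : ∀ a e : A, a ⊓ e ≤ ⊥ → imp (imp e ⊥) (a ⊔ e) = a := by
      intro a e hae
      have hane : a ≤ imp e ⊥ := hPc e a hae
      have c3' := C3 (imp e ⊥) (a ⊔ e)
      have hnew : imp e ⊥ ⊓ (a ⊔ e) = a := by
        rw [inf_sup_left, inf_eq_right.mpr hane, inf_comm (imp e ⊥) e, hND e,
          sup_bot_eq]
      have hup : imp (imp e ⊥) (a ⊔ e) ≤ imp e ⊥ := by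
        refine hPc e _ ?_
        have d := hDC3 (imp e ⊥) (a ⊔ e)
        have h6 : e ≤ imp (imp e ⊥) ⊥ := hDN e
        have h5a : imp (imp e ⊥) (a ⊔ e) ⊓ e ≤ imp (a ⊔ e) ⊥ := by
          calc imp (imp e ⊥) (a ⊔ e) ⊓ e
              ≤ imp (imp e ⊥) (a ⊔ e) ⊓ imp (imp e ⊥) ⊥ := inf_le_inf_left _ h6
            _ = imp (imp e ⊥) ⊥ ⊓ imp (imp e ⊥) (a ⊔ e) := inf_comm _ _
            _ ≤ imp (a ⊔ e) ⊥ := d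
        have h5b : imp (imp e ⊥) (a ⊔ e) ⊓ e ≤ imp (a ⊔ e) ⊥ ⊓ (a ⊔ e) :=
          le_inf h5a (inf_le_right.trans le_sup_right)
        calc imp (imp e ⊥) (a ⊔ e) ⊓ e ≤ imp (a ⊔ e) ⊥ ⊓ (a ⊔ e) := h5b
          _ = (a ⊔ e) ⊓ imp (a ⊔ e) ⊥ := inf_comm _ _
          _ ≤ ⊥ := (hND (a ⊔ e)).le
      calc imp (imp e ⊥) (a ⊔ e)
          = imp e ⊥ ⊓ imp (imp e ⊥) (a ⊔ e) := (inf_eq_right.mpr hup).symm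
        _ = imp e ⊥ ⊓ (a ⊔ e) := c3'
        _ = a := hnew
    -- ======================= main proof =======================
    intro a b
    -- upper bounds
    have up1 : imp a b ≤ imp a (a ⊓ b) := by
      have h := C4 a b a
      rwa [inf_idem] at h
    have up2 : imp a b ≤ imp (imp a ⊥) (imp a ⊥ ⊓ imp b ⊥) := by
      refine hGalois2 _ _ _ ?_
      exact (inf_comm (imp a b) (imp a ⊥)).le.trans (hDC3 a b)
    -- lower bound
    set m : A := imp a (a ⊓ b) ⊓ imp (imp a ⊥) (imp a ⊥ ⊓ imp b ⊥) with hm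
    have hm_a : m ⊓ a ≤ b := hGalois1 a b m inf_le_left
    have hm_na : m ⊓ imp a ⊥ ≤ imp b ⊥ := hGalois1 (imp a ⊥) (imp b ⊥) m inf_le_right
    -- e := ¬a ⊓ b ;  w := a ⊔ e
    have hme : m ⊓ (imp a ⊥ ⊓ b) ≤ ⊥ := by
      calc m ⊓ (imp a ⊥ ⊓ b) = (m ⊓ imp a ⊥) ⊓ b := (inf_assoc _ _ _).symm
        _ ≤ imp b ⊥ ⊓ b := inf_le_inf_right _ hm_na
        _ = b ⊓ imp b ⊥ := inf_comm _ _
        _ ≤ ⊥ := (hND b).le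
    have hmne : m ≤ imp (imp a ⊥ ⊓ b) ⊥ := hPc _ m hme
    have hae : a ⊓ (imp a ⊥ ⊓ b) ≤ ⊥ := by
      calc a ⊓ (imp a ⊥ ⊓ b) ≤ a ⊓ imp a ⊥ := inf_le_inf_left _ inf_le_left
        _ ≤ ⊥ := (hND a).le
    have key : imp (imp (imp a ⊥ ⊓ b) ⊥) (a ⊔ (imp a ⊥ ⊓ b)) = a := hCore a _ hae
    have step : imp (imp a ⊥ ⊓ b) ⊥ ≤ imp a (a ⊔ (imp a ⊥ ⊓ b)) := by
      have h := hAssert (imp (imp a ⊥ ⊓ b) ⊥) (a ⊔ (imp a ⊥ ⊓ b))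
      rwa [key] at h
    -- w → (a ⊔ b) = ⊤
    have hwTop : imp (a ⊔ (imp a ⊥ ⊓ b)) (a ⊔ b) = ⊤ := by
      refine hT _ _ (sup_le le_sup_left (inf_le_right.trans le_sup_right)) ?_
      refine hPc _ _ ?_
      have ha' : a ⊓ imp (a ⊔ (imp a ⊥ ⊓ b)) ⊥ ≤ ⊥ := by
        calc a ⊓ imp (a ⊔ (imp a ⊥ ⊓ b)) ⊥
            ≤ (a ⊔ (imp a ⊥ ⊓ b)) ⊓ imp (a ⊔ (imp a ⊥ ⊓ b)) ⊥ :=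
              inf_le_inf_right _ le_sup_left
          _ ≤ ⊥ := (hND _).le
      have hb' : b ⊓ imp (a ⊔ (imp a ⊥ ⊓ b)) ⊥ ≤ ⊥ := by
        have h1 : b ⊓ imp (a ⊔ (imp a ⊥ ⊓ b)) ⊥ ≤ imp a ⊥ :=
          le_trans (inf_le_inf_left _ (hNotAnti a _ le_sup_left)) inf_le_right
        have h2 : b ⊓ imp (a ⊔ (imp a ⊥ ⊓ b)) ⊥ ≤ imp (imp a ⊥ ⊓ b) ⊥ :=
          inf_le_right.trans (hNotAnti _ _ le_sup_right)
        have h3 : b ⊓ imp (a ⊔ (imp a ⊥ ⊓ b)) ⊥ ≤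
            (imp a ⊥ ⊓ b) ⊓ imp (imp a ⊥ ⊓ b) ⊥ :=
          le_inf (le_inf h1 inf_le_left) h2
        exact h3.trans (hND _).le
      calc (a ⊔ b) ⊓ imp (a ⊔ (imp a ⊥ ⊓ b)) ⊥
          = a ⊓ imp (a ⊔ (imp a ⊥ ⊓ b)) ⊥ ⊔ b ⊓ imp (a ⊔ (imp a ⊥ ⊓ b)) ⊥ :=
            inf_sup_right _ _ _
        _ ≤ ⊥ := sup_le ha' hb'
    -- m ≤ (a ⊔ b) → b
    have step1 : m ≤ imp (a ⊔ b) b := by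
      have hmy : m ⊓ (a ⊔ b) ≤ b := by
        rw [inf_sup_left]
        exact sup_le hm_a inf_le_right
      have h := hGalois2 (a ⊔ b) b m hmy
      rwa [inf_eq_right.mpr le_sup_right] at h
    -- m ≤ a → (a ⊔ b)
    have step2 : m ≤ imp a (a ⊔ b) := by
      have h1 : m ≤ imp a (a ⊔ (imp a ⊥ ⊓ b)) := hmne.trans step
      have h2 : m ≤ imp a (a ⊔ (imp a ⊥ ⊓ b)) ⊓ imp (a ⊔ (imp a ⊥ ⊓ b)) (a ⊔ b) :=
        le_inf h1 (by rw [hwTop]; exact le_top)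
      exact h2.trans (hTrans a _ (a ⊔ b))
    have final : m ≤ imp a b :=
      (le_inf step2 step1).trans (hTrans a (a ⊔ b) b)
    exact le_antisymm (le_inf up1 up2) final
  · -- ======================= Heyting algebra part =======================
    intro a b
    have h1 : aᶜ ⇨ (a ⊓ b)ᶜ = ⊤ := himp_eq_top_iff.mpr (compl_le_compl inf_le_left)
    rw [h1, inf_top_eq]
    apply le_antisymm
    · exact himp_le_himp_left inf_le_right
    · rw [le_himp_iff]
      exact le_inf inf_le_right himp_inf_le
end

section
/- In every connexive Heyting algebra, a → b = max { c : a ∧ c ≤ b and ¬a ∧ c ≤ ¬b }, i.e., a ∧ (a → b) ≤ b, ¬a ∧ (a → b) ≤ ¬b, and every c with a ∧ c ≤ b and ¬a ∧ c ≤ ¬b satisfies c ≤ a → b (where ¬x := x → 0). -/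
theorem stmt18 {A : Type*} [DistribLattice A] [BoundedOrder A] (imp : A → A → A)
    (C1 : ∀ x y z : A, imp (imp x y) (imp (imp y z) (imp x z)) = ⊤)
    (C2 : ∀ x y : A, imp (imp x y) (imp (imp x (imp y ⊥)) ⊥) = ⊤)
    (C3 : ∀ x y : A, x ⊓ imp x y = x ⊓ y)
    (C4 : ∀ x y z : A, imp x y ≤ imp (z ⊓ x) (z ⊓ y))
    (C5 : ∀ x y z : A, imp x y ≤ imp (z ⊔ x) (z ⊔ y)) :
    ∀ a b : A, a ⊓ imp a b ≤ b ∧ imp a ⊥ ⊓ imp a b ≤ imp b ⊥ ∧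
      ∀ c : A, a ⊓ c ≤ b → imp a ⊥ ⊓ c ≤ imp b ⊥ → c ≤ imp a b := by
  -- ⊤ → y = y
  have topImp : ∀ y : A, imp ⊤ y = y := by
    intro y; have := C3 ⊤ y; simpa using this
  -- if x → y = ⊤ then x ≤ y
  have B : ∀ x y : A, imp x y = ⊤ → x ≤ y := by
    intro x y h
    have h3 := C3 x y
    rw [h, inf_top_eq] at h3
    exact h3.le.trans inf_le_right
  -- y → ((y → z) → z) = ⊤
  have E' : ∀ y z : A, imp y (imp (imp y z) z) = ⊤ := by
    intro y z; have := C1 ⊤ y z; rwa [topImp, topImp] at this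
  have E : ∀ y z : A, y ≤ imp (imp y z) z := fun y z => B _ _ (E' y z)
  -- x → y ≤ (y → z) → (x → z)
  have D : ∀ x y z : A, imp x y ≤ imp (imp y z) (imp x z) := fun x y z => B _ _ (C1 x y z)
  -- composition
  have comp : ∀ x y z : A, imp x y ⊓ imp y z ≤ imp x z := by
    intro x y z
    calc imp x y ⊓ imp y z ≤ imp (imp y z) (imp x z) ⊓ imp y z :=
          inf_le_inf_right _ (D x y z)
      _ = imp y z ⊓ imp (imp y z) (imp x z) := inf_comm _ _
      _ = imp y z ⊓ imp x z := C3 _ _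
      _ ≤ imp x z := inf_le_right
  -- y ≤ z → (z ⊓ y)
  have L6 : ∀ y z : A, y ≤ imp z (z ⊓ y) := by
    intro y z
    have h := C4 ⊤ y z
    rwa [topImp, inf_top_eq] at h
  -- residuation, direction 1
  have R1 : ∀ x y z : A, z ⊓ x ≤ y → x ≤ imp z (z ⊓ y) := by
    intro x y z h
    have h1 : x ≤ imp z (z ⊓ x) := L6 x z
    have h2 := C5 z (z ⊓ x) (z ⊓ y)
    rw [sup_eq_right.mpr inf_le_left,
        sup_eq_left.mpr (le_inf inf_le_left h : z ⊓ x ≤ z ⊓ y)] at h2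
    exact h1.trans h2
  have impBotEq : ∀ z : A, imp z ⊥ = imp z (z ⊓ ⊥) := by intro z; rw [inf_bot_eq]
  -- negation residuation
  have NR1 : ∀ x z : A, z ⊓ x ≤ ⊥ → x ≤ imp z ⊥ := by
    intro x z h; rw [impBotEq]; exact R1 x ⊥ z h
  -- z ⊓ ¬z = ⊥
  have infN : ∀ z : A, z ⊓ imp z ⊥ = ⊥ := by intro z; rw [C3, inf_bot_eq]
  -- ¬ is antitone
  have Nanti : ∀ s t : A, s ≤ t → imp t ⊥ ≤ imp s ⊥ := by
    intro s t h
    apply NR1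
    calc s ⊓ imp t ⊥ ≤ t ⊓ imp t ⊥ := inf_le_inf_right _ h
      _ = ⊥ := infN t
  -- double negation introduction
  have dn : ∀ t : A, t ≤ imp (imp t ⊥) ⊥ := fun t => E t ⊥
  -- ¬¬t ≤ t → ⊤
  have M : ∀ t : A, imp (imp t ⊥) ⊥ ≤ imp t ⊤ := by
    intro t
    set s := imp (imp t ⊥) ⊥ with hs
    have h1 : s ≤ imp s ⊤ := by
      have h := C3 s ⊤
      rw [inf_top_eq] at h
      exact h.symm.le.trans inf_le_right
    have h2 : imp t s = ⊤ := E' t ⊥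
    calc s ≤ imp t s ⊓ imp s ⊤ := le_inf (by rw [h2]; exact le_top) h1
      _ ≤ imp t ⊤ := comp t s ⊤
  -- the maximality part
  have part3 : ∀ a b c : A, a ⊓ c ≤ b → imp a ⊥ ⊓ c ≤ imp b ⊥ → c ≤ imp a b := by
    intro a b c h1 h2
    -- c ≤ (a ⊔ b) → b
    have hab : c ≤ imp (a ⊔ b) b := by
      have s1 : c ≤ imp a (a ⊓ b) := R1 c b a h1
      have s2 := C5 a (a ⊓ b) b
      rw [sup_eq_left.mpr (inf_le_right : a ⊓ b ≤ b), sup_comm b a] at s2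
      exact s1.trans s2
    -- c ≤ a → (a ⊔ b)
    have haab : c ≤ imp a (a ⊔ b) := by
      set q := a ⊔ (imp a ⊥ ⊓ imp b ⊥) with hq
      have hcq : c ≤ imp (imp q ⊥) ⊥ := by
        apply NR1
        have e1 : imp q ⊥ ≤ imp a ⊥ := Nanti a q le_sup_left
        have e2 : imp q ⊥ ≤ imp (imp a ⊥ ⊓ imp b ⊥) ⊥ := Nanti _ q le_sup_right
        have e3 : imp q ⊥ ⊓ c ≤ imp a ⊥ ⊓ imp b ⊥ := by
          have h4 : imp q ⊥ ⊓ c ≤ imp a ⊥ ⊓ c := inf_le_inf_right c e1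
          exact h4.trans (le_inf inf_le_left h2)
        calc imp q ⊥ ⊓ c ≤ (imp a ⊥ ⊓ imp b ⊥) ⊓ imp q ⊥ := le_inf e3 inf_le_left
          _ ≤ (imp a ⊥ ⊓ imp b ⊥) ⊓ imp (imp a ⊥ ⊓ imp b ⊥) ⊥ := inf_le_inf_left _ e2
          _ = ⊥ := infN _
      have hM : c ≤ imp q ⊤ := hcq.trans (M q)
      have hbm : b ⊓ (imp a ⊥ ⊓ imp b ⊥) = ⊥ := by
        apply le_antisymm _ bot_le
        calc b ⊓ (imp a ⊥ ⊓ imp b ⊥) ≤ b ⊓ imp b ⊥ := inf_le_inf_left b inf_le_right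
          _ = ⊥ := infN b
      have hq1 : (a ⊔ b) ⊓ q = a := by
        rw [hq, ← sup_inf_left, hbm, sup_bot_eq]
      have hc4 := C4 q ⊤ (a ⊔ b)
      rw [hq1, inf_top_eq] at hc4
      exact hM.trans hc4
    exact le_trans (le_inf haab hab) (comp a (a ⊔ b) b)
  intro a b
  refine ⟨(C3 a b).le.trans inf_le_right, ?_, fun c h1 h2 => part3 a b c h1 h2⟩
  -- ¬a ⊓ (a → b) ≤ ¬b
  have hd : imp a ⊥ ⊓ b ≤ imp a (imp b ⊥) := by
    apply part3
    · calc a ⊓ (imp a ⊥ ⊓ b) ≤ a ⊓ imp a ⊥ := inf_le_inf_left a inf_le_left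
        _ = ⊥ := infN a
        _ ≤ imp b ⊥ := bot_le
    · exact le_trans inf_le_right (le_trans inf_le_right (dn b))
  have hC2 : imp a b ≤ imp (imp a (imp b ⊥)) ⊥ := B _ _ (C2 a b)
  apply NR1
  calc b ⊓ (imp a ⊥ ⊓ imp a b)
      ≤ imp a (imp b ⊥) ⊓ imp a b := by
        refine le_inf (le_trans ?_ hd) (le_trans inf_le_right inf_le_right)
        exact le_inf (le_trans inf_le_right inf_le_left) inf_le_left
    _ ≤ imp a (imp b ⊥) ⊓ imp (imp a (imp b ⊥)) ⊥ := inf_le_inf_left _ hC2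
    _ = ⊥ := infN _
end

section
/- Let A be a connexive Heyting algebra and a an element of A. Then ¬¬a = a if and only if a → b ≤ b → a for all b in A (where ¬x := x → 0). -/
theorem stmt19 {A : Type*} [DistribLattice A] [BoundedOrder A] (imp : A → A → A)
    (C1 : ∀ x y z : A, imp (imp x y) (imp (imp y z) (imp x z)) = ⊤)
    (C2 : ∀ x y : A, imp (imp x y) (imp (imp x (imp y ⊥)) ⊥) = ⊤)
    (C3 : ∀ x y : A, x ⊓ imp x y = x ⊓ y)
    (C4 : ∀ x y z : A, imp x y ≤ imp (z ⊓ x) (z ⊓ y))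
    (C5 : ∀ x y z : A, imp x y ≤ imp (z ⊔ x) (z ⊔ y)) (a : A) :
    imp (imp a ⊥) ⊥ = a ↔ ∀ b : A, imp a b ≤ imp b a := by
  have mp : ∀ x y : A, x ⊓ imp x y ≤ y := fun x y => (C3 x y).le.trans inf_le_right
  have topimp : ∀ y : A, imp ⊤ y = y := by
    intro y
    have h := C3 ⊤ y
    simpa using h
  have ofTop : ∀ u v : A, imp u v = ⊤ → u ≤ v := by
    intro u v h
    have h2 := mp u v
    rwa [h, inf_top_eq] at h2
  have T : ∀ x y z : A, imp x y ≤ imp (imp y z) (imp x z) :=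
    fun x y z => ofTop _ _ (C1 x y z)
  have L3 : ∀ y z : A, y ≤ imp z (z ⊓ y) := by
    intro y z
    have h := C4 ⊤ y z
    rwa [topimp, inf_top_eq] at h
  have impSelf : ∀ x : A, imp x x = ⊤ := by
    intro x
    have h := L3 ⊤ x
    rw [inf_top_eq] at h
    exact top_le_iff.mp h
  have dn : ∀ y : A, imp y (imp (imp y ⊥) ⊥) = ⊤ := by
    intro y
    have h := C2 ⊤ y
    rwa [topimp, topimp] at h
  have Ant : ∀ u v w : A, imp u v = ⊤ → imp v w ≤ imp u w := by
    intro u v w h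
    refine ofTop _ _ ?_
    have h2 := T u v w
    rw [h] at h2
    exact top_le_iff.mp h2
  have contrap : ∀ x y : A, imp x y ≤ imp (imp y ⊥) (imp x ⊥) := fun x y => T x y ⊥
  have CCle : ∀ x y : A, imp x (imp y ⊥) ≤ imp y (imp x ⊥) := fun x y =>
    (contrap x (imp y ⊥)).trans (Ant _ _ _ (dn y))
  have cut : ∀ u v w : A, imp u v ⊓ imp v w ≤ imp u w := by
    intro u v w
    have h1 : imp u v ⊓ imp v w ≤ imp v w ⊓ imp (imp v w) (imp u w) :=
      le_inf inf_le_right (inf_le_left.trans (T u v w))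
    exact h1.trans ((C3 _ _).le.trans inf_le_right)
  have R : ∀ x y z : A, z ⊓ x ≤ y → z ≤ imp x (x ⊓ y) := by
    intro x y z h
    have h1 : z ≤ imp x (x ⊓ z) := L3 z x
    have h2 : imp x (x ⊓ z) ≤ imp ((x ⊓ y) ⊔ x) ((x ⊓ y) ⊔ (x ⊓ z)) := C5 x (x ⊓ z) (x ⊓ y)
    have e1 : (x ⊓ y) ⊔ x = x := sup_eq_right.mpr inf_le_left
    have e2 : (x ⊓ y) ⊔ (x ⊓ z) = x ⊓ y := by
      refine sup_eq_left.mpr (le_inf inf_le_left ?_)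
      rw [inf_comm]
      exact h
    rw [e1, e2] at h2
    exact h1.trans h2
  have Nbot : ∀ x : A, x ⊓ imp x ⊥ = ⊥ := by
    intro x
    simpa using C3 x ⊥
  have pseudo : ∀ x z : A, z ⊓ x ≤ ⊥ → z ≤ imp x ⊥ := by
    intro x z h
    have h2 := R x ⊥ z h
    rwa [inf_bot_eq] at h2
  have Nanti : ∀ u v : A, u ≤ v → imp v ⊥ ≤ imp u ⊥ := by
    intro u v h
    apply pseudo
    have h1 : imp v ⊥ ⊓ u ≤ v ⊓ imp v ⊥ := le_inf (inf_le_right.trans h) inf_le_left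
    exact h1.trans (Nbot v).le
  have leNN : ∀ x : A, x ≤ imp (imp x ⊥) ⊥ := fun x => ofTop _ _ (dn x)
  have arbot : ∀ y : A, imp (imp y ⊥) y = ⊥ := by
    intro y
    have h := C2 (imp y ⊥) y
    rw [impSelf, topimp] at h
    have h2 := Nbot (imp (imp y ⊥) y)
    rw [h, inf_top_eq] at h2
    exact h2
  have botimp : ∀ y : A, imp y ⊥ ≤ imp ⊥ y := by
    intro y
    have h := T ⊤ (imp y ⊥) y
    rw [topimp, topimp] at h
    rwa [arbot y] at h
  have boundA : ∀ u z : A, imp (imp u ⊥) ⊥ ≤ imp (z ⊓ u) z := by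
    intro u z
    have h1 : imp (imp u ⊥) ⊥ ≤ imp ⊥ (imp u ⊥) := botimp (imp u ⊥)
    have h2 : imp ⊥ (imp u ⊥) ≤ imp u (imp ⊥ ⊥) := CCle ⊥ u
    rw [impSelf ⊥] at h2
    have h3 : imp u ⊤ ≤ imp (z ⊓ u) (z ⊓ ⊤) := C4 u ⊤ z
    rw [inf_top_eq] at h3
    exact (h1.trans h2).trans h3
  have lowNeg : ∀ u v : A, u ≤ v →
      imp (imp u ⊥) (imp u ⊥ ⊓ imp v ⊥) ≤ imp u v := by
    intro u v huv
    have hNvw : imp v ⊥ ≤ imp v (v ⊓ u) := by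
      refine R v u (imp v ⊥) ?_
      have : imp v ⊥ ⊓ v = ⊥ := by rw [inf_comm]; exact Nbot v
      rw [this]; exact bot_le
    have huw : u ≤ imp v (v ⊓ u) := L3 u v
    have h1 : imp (imp v (v ⊓ u)) ⊥ ≤ imp (imp v ⊥) ⊥ := Nanti _ _ hNvw
    have h2 : imp (imp v (v ⊓ u)) ⊥ ≤ imp u ⊥ := Nanti _ _ huw
    have hr : imp (imp u ⊥) (imp u ⊥ ⊓ imp v ⊥) ⊓ imp (imp v (v ⊓ u)) ⊥ ≤ ⊥ := by
      have ra : imp (imp u ⊥) (imp u ⊥ ⊓ imp v ⊥) ⊓ imp (imp v (v ⊓ u)) ⊥ ≤ imp v ⊥ := by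
        have hx : imp (imp u ⊥) (imp u ⊥ ⊓ imp v ⊥) ⊓ imp (imp v (v ⊓ u)) ⊥ ≤
            imp u ⊥ ⊓ imp (imp u ⊥) (imp u ⊥ ⊓ imp v ⊥) :=
          le_inf (inf_le_right.trans h2) inf_le_left
        refine hx.trans ?_
        rw [C3]
        exact inf_le_right.trans inf_le_right
      have rb : imp (imp u ⊥) (imp u ⊥ ⊓ imp v ⊥) ⊓ imp (imp v (v ⊓ u)) ⊥ ≤
          imp (imp v ⊥) ⊥ := inf_le_right.trans h1
      exact (le_inf ra rb).trans (Nbot (imp v ⊥)).le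
    have hnn : imp (imp u ⊥) (imp u ⊥ ⊓ imp v ⊥) ≤ imp (imp (imp v (v ⊓ u)) ⊥) ⊥ :=
      pseudo _ _ hr
    refine hnn.trans ?_
    have hb : imp (imp (imp v (v ⊓ u)) ⊥) ⊥ ≤ imp (v ⊓ imp v (v ⊓ u)) v :=
      boundA (imp v (v ⊓ u)) v
    have e : v ⊓ imp v (v ⊓ u) = u := by
      rw [C3, ← inf_assoc, inf_idem, inf_eq_right]
      exact huv
    rwa [e] at hb
  have C2' : ∀ x y : A, imp x y ≤ imp (imp x (imp y ⊥)) ⊥ := fun x y => ofTop _ _ (C2 x y)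
  have lem23 : ∀ x y : A, imp x ⊥ ⊓ y ≤ imp x (imp y ⊥) := by
    intro x y
    have h1 : y ≤ imp ⊥ (imp y ⊥) := (leNN y).trans (botimp (imp y ⊥))
    exact (inf_le_inf le_rfl h1).trans (cut x ⊥ (imp y ⊥))
  have U3 : ∀ x y : A, imp x y ⊓ imp x ⊥ ⊓ y ≤ ⊥ := by
    intro x y
    have h1 : imp x y ⊓ imp x ⊥ ⊓ y ≤
        imp x (imp y ⊥) ⊓ imp (imp x (imp y ⊥)) ⊥ := by
      refine le_inf ?_ ?_
      · refine le_trans ?_ (lem23 x y)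
        exact le_inf (inf_le_left.trans inf_le_right) inf_le_right
      · exact inf_le_left.trans (inf_le_left.trans (C2' x y))
    exact h1.trans (Nbot _).le
  constructor
  · intro H b
    have s1 : imp a b ≤ imp b (b ⊓ a) := by
      apply R
      have h0 : (imp a b ⊓ b) ⊓ imp a ⊥ ≤ ⊥ := by
        refine le_trans ?_ (U3 a b)
        exact le_inf (le_inf (inf_le_left.trans inf_le_left) inf_le_right)
          (inf_le_left.trans inf_le_right)
      have h2 : imp a b ⊓ b ≤ imp (imp a ⊥) ⊥ := pseudo _ _ h0
      rwa [H] at h2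
    have s2 : imp a b ≤ imp (b ⊓ a) a := by
      refine le_trans ?_ (lowNeg (b ⊓ a) a inf_le_right)
      apply R
      apply pseudo
      have h1 : (imp a b ⊓ imp (b ⊓ a) ⊥) ⊓ a ≤ (b ⊓ a) ⊓ imp (b ⊓ a) ⊥ := by
        refine le_inf (le_inf ?_ inf_le_right) (inf_le_left.trans inf_le_right)
        refine le_trans ?_ (mp a b)
        exact le_inf inf_le_right (inf_le_left.trans inf_le_left)
      exact h1.trans (Nbot _).le
    exact (le_inf s1 s2).trans (cut b (b ⊓ a) a)
  · intro H
    have h1 : imp a (imp (imp a ⊥) ⊥) = ⊤ := dn a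
    have h2 : imp (imp (imp a ⊥) ⊥) a = ⊤ := by
      have h3 := H (imp (imp a ⊥) ⊥)
      rw [h1] at h3
      exact top_le_iff.mp h3
    exact le_antisymm (ofTop _ _ h2) (leNN a)
end
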